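/- Let n = m(m+1)/2 be a triangular number and let g ∈ Σ_n be a permutation of cycle type λ = [2m−1, 2m−5, 2m−9, …] (the diagonal hook lengths of the staircase partition [m, m−1, …, 1]). Then the centralizer C_{Σ_n}(g) has odd order, and g is inverted by an involution t ∈ Σ_n that is a product of ⌊(m²+1)/4⌋ disjoint transpositions. -/

import Mathlib

/-!
The cycle lengths of `g` are odd and pairwise distinct and `g` has at most one fixed point, so in
the formula `(n - Σλ)! · ∏ λᵢ · ∏ (multiplicity of λᵢ)!` for the order of the centralizer
every factor is odd. As `g` is conjugate to `g⁻¹`, say by `u`, the element `u²` centralizes `g`,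
hence has odd order `r`, and `t = u ^ r` is an involution inverting `g`. Because the cycle lengths
are distinct, `t` inverts each cycle of `g`; on a cycle of odd length it then acts as a reflection
of an odd polygon and fixes exactly one point, and it also fixes the fixed point of `g`, if any.
So `t` moves `Σ (λᵢ - 1) = 2 ⌊(m² + 1) / 4⌋` points.
-/

open Finset

theorem pow_eq_one_of_pow_two_mul_eq_one {G : Type*} [Monoid G] {a : G} (ha : Odd (orderOf a))
    {i : ℕ} (h : a ^ (2 * i) = 1) : a ^ i = 1 := by
  rw [← orderOf_dvd_iff_pow_eq_one] at h ⊢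
  exact (Nat.coprime_two_right.mpr ha).dvd_of_dvd_mul_left h

theorem exists_involution_conj_eq_inv {G : Type*} [Group G] {g : G}
    (hC : Odd (Nat.card (Subgroup.centralizer {g}))) (hg : IsConj g g⁻¹) :
    ∃ t : G, t ^ 2 = 1 ∧ t * g * t⁻¹ = g⁻¹ := by
  obtain ⟨u, hu⟩ := isConj_iff.mp hg
  have hu2 : u ^ 2 * g * (u ^ 2)⁻¹ = g := by
    calc u ^ 2 * g * (u ^ 2)⁻¹ = u * (u * g * u⁻¹) * u⁻¹ := by
          simp only [sq, mul_inv_rev, mul_assoc]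
      _ = g := by rw [hu, ← conj_inv, hu, inv_inv]
  have hcomm : Commute (u ^ 2) g := mul_inv_eq_iff_eq_mul.mp hu2
  obtain ⟨k, hk⟩ : Odd (orderOf (u ^ 2)) := hC.of_dvd_nat
    (Subgroup.orderOf_dvd_natCard _ (Subgroup.mem_centralizer_singleton_iff.mpr hcomm.eq))
  refine ⟨u ^ (2 * k + 1), ?_, ?_⟩
  · rw [← pow_mul, mul_comm, pow_mul, ← hk, pow_orderOf_eq_one]
  · calc u ^ (2 * k + 1) * g * (u ^ (2 * k + 1))⁻¹
          = (u ^ 2) ^ k * (u * g * u⁻¹) * ((u ^ 2) ^ k)⁻¹ := by group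
      _ = g⁻¹ := by rw [hu, ((hcomm.pow_left k).inv_right).eq, mul_inv_cancel_right]

namespace Equiv.Perm

theorem apply_pow_apply_of_conj_eq_inv {α : Type*} {c t : Perm α} (h : t * c * t⁻¹ = c⁻¹)
    (k : ℕ) (x : α) : t ((c ^ k) x) = (c ^ k)⁻¹ (t x) := by
  rw [← inv_pow, ← h, conj_pow]
  simp

variable {α : Type*} [Fintype α] [DecidableEq α]

theorem odd_card_centralizer {g : Perm α} (hnodup : g.cycleType.Nodup)
    (hodd : ∀ l ∈ g.cycleType, Odd l) (hfix : Fintype.card α ≤ #g.support + 1) :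
    Odd (Nat.card (Subgroup.centralizer {g})) := by
  have hfact : (Fintype.card α - g.cycleType.sum).factorial = 1 :=
    Nat.factorial_eq_one.mpr (by rw [sum_cycleType]; omega)
  have hcount : ∏ l ∈ g.cycleType.toFinset, (g.cycleType.count l).factorial = 1 :=
    Finset.prod_eq_one fun l hl => by
      rw [Multiset.count_eq_one_of_mem hnodup (Multiset.mem_toFinset.mp hl), Nat.factorial_one]
  rw [nat_card_centralizer, hfact, hcount, one_mul, mul_one]
  exact Multiset.prod_induction Odd _ (fun _ _ => Odd.mul) odd_one hodd

theorem eq_of_mem_cycleFactorsFinset_of_card_support_eq {g c d : Perm α}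
    (hnodup : g.cycleType.Nodup) (hc : c ∈ g.cycleFactorsFinset) (hd : d ∈ g.cycleFactorsFinset)
    (hcd : #c.support = #d.support) : c = d :=
  Multiset.inj_on_of_nodup_map (f := Finset.card ∘ support) (by rwa [← cycleType_def]) c hc d hd hcd

theorem inv_mem_cycleFactorsFinset_inv {g c : Perm α} (hc : c ∈ g.cycleFactorsFinset) :
    c⁻¹ ∈ g⁻¹.cycleFactorsFinset := by
  obtain ⟨hcyc, hcg⟩ := mem_cycleFactorsFinset_iff.mp hc
  refine mem_cycleFactorsFinset_iff.mpr ⟨hcyc.inv, fun x hx => ?_⟩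
  rw [support_inv] at hx
  have hmem : c⁻¹ x ∈ c.support := by rw [← support_inv, apply_mem_support, support_inv]; exact hx
  rw [eq_comm, inv_eq_iff_eq, ← hcg _ hmem]
  simp

theorem conj_eq_inv_of_mem_cycleFactorsFinset {g t c : Perm α} (hnodup : g.cycleType.Nodup)
    (ht : t * g * t⁻¹ = g⁻¹) (hc : c ∈ g.cycleFactorsFinset) : t * c * t⁻¹ = c⁻¹ := by
  refine eq_of_mem_cycleFactorsFinset_of_card_support_eq (g := g⁻¹) (by rwa [cycleType_inv])
    ?_ (inv_mem_cycleFactorsFinset_inv hc) (by rw [card_support_conj, support_inv])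
  rw [← ht]
  exact (mem_cycleFactorsFinset_conj g t c).mpr hc

theorem odd_card_support_of_mem_cycleFactorsFinset {g c : Perm α}
    (hodd : ∀ l ∈ g.cycleType, Odd l) (hc : c ∈ g.cycleFactorsFinset) : Odd #c.support :=
  hodd _ (by rw [cycleType_def]; exact Multiset.mem_map_of_mem _ hc)

section Inverted

variable {c t : Perm α}

theorem apply_mem_support_iff_of_conj_eq_inv (h : t * c * t⁻¹ = c⁻¹) {x : α} :
    t x ∈ c.support ↔ x ∈ c.support := by
  conv_rhs => rw [← Finset.mem_map' t.toEmbedding, ← support_conj, h, support_inv]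
  rfl

theorem IsCycle.eq_of_conj_eq_inv (hc : c.IsCycle) (hodd : Odd #c.support)
    (h : t * c * t⁻¹ = c⁻¹) {x y : α} (hx : x ∈ c.support) (hy : y ∈ c.support)
    (htx : t x = x) (hty : t y = y) : x = y := by
  obtain ⟨i, rfl⟩ := hc.exists_pow_eq (mem_support.mp hx) (mem_support.mp hy)
  have h2i : (c ^ (2 * i)) x = x := by
    rw [apply_pow_apply_of_conj_eq_inv h, htx, inv_eq_iff_eq] at hty
    rw [two_mul, pow_add, mul_apply, ← hty]
  have : c ^ i = 1 := pow_eq_one_of_pow_two_mul_eq_one (hc.orderOf ▸ hodd)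
    ((hc.pow_eq_one_iff' (mem_support.mp hx)).mpr h2i)
  rw [this, one_apply]

theorem IsCycle.exists_apply_eq_self_of_conj_eq_inv (hc : c.IsCycle) (hodd : Odd #c.support)
    (h : t * c * t⁻¹ = c⁻¹) : ∃ x ∈ c.support, t x = x := by
  obtain ⟨x, hx⟩ := hc.nonempty_support
  have htx := (apply_mem_support_iff_of_conj_eq_inv h).mpr hx
  obtain ⟨j, hj⟩ := hc.exists_pow_eq (mem_support.mp hx) (mem_support.mp htx)
  -- `c ^ j` has odd order, so it is the square of `s = (c ^ j) ^ r`, and `s x` is fixed by `t`.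
  have hcop : Nat.Coprime 2 (orderOf (c ^ j)) :=
    Nat.coprime_two_left.mpr ((hc.orderOf ▸ hodd).of_dvd_nat (orderOf_pow_dvd j))
  obtain ⟨r, hr⟩ := exists_pow_eq_self_of_coprime hcop
  refine ⟨(c ^ (j * r)) x, pow_apply_mem_support.mpr hx, ?_⟩
  rw [apply_pow_apply_of_conj_eq_inv h, ← hj, inv_eq_iff_eq, ← mul_apply, ← pow_add]
  conv_lhs => rw [← hr, ← pow_mul, ← pow_mul]
  ring_nf

end Inverted

variable {g t : Perm α}

theorem support_subset_of_conj_eq_inv (hfix : Fintype.card α ≤ #g.support + 1)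
    (ht : t * g * t⁻¹ = g⁻¹) : t.support ⊆ g.support := by
  intro x hx
  by_contra hxg
  have htxg : t x ∉ g.support := (apply_mem_support_iff_of_conj_eq_inv ht).not.mpr hxg
  have hle : #g.supportᶜ ≤ 1 := by rw [card_compl]; omega
  exact mem_support.mp hx (Finset.card_le_one.mp hle _ (mem_compl.mpr htxg) _ (mem_compl.mpr hxg))

theorem card_filter_apply_eq_self_support (hnodup : g.cycleType.Nodup)
    (hodd : ∀ l ∈ g.cycleType, Odd l) (ht : t * g * t⁻¹ = g⁻¹) :
    #{x ∈ g.support | t x = x} = #g.cycleFactorsFinset := by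
  have hcyc {c} (hc : c ∈ g.cycleFactorsFinset) : c.IsCycle :=
    (mem_cycleFactorsFinset_iff.mp hc).1
  refine card_bij (fun x _ => g.cycleOf x) (fun x hx => ?_) (fun x hx y hy hxy => ?_)
    (fun c hc => ?_)
  · exact cycleOf_mem_cycleFactorsFinset_iff.mpr (mem_filter.mp hx).1
  · rw [mem_filter] at hx hy
    have hc := cycleOf_mem_cycleFactorsFinset_iff.mpr hx.1
    have hxc : x ∈ (g.cycleOf x).support := mem_support_cycleOf_iff.mpr ⟨.refl _ _, hx.1⟩
    have hyc : y ∈ (g.cycleOf x).support := by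
      rw [hxy]; exact mem_support_cycleOf_iff.mpr ⟨.refl _ _, hy.1⟩
    exact (hcyc hc).eq_of_conj_eq_inv (odd_card_support_of_mem_cycleFactorsFinset hodd hc)
      (conj_eq_inv_of_mem_cycleFactorsFinset hnodup ht hc) hxc hyc hx.2 hy.2
  · obtain ⟨x, hx, htx⟩ := (hcyc hc).exists_apply_eq_self_of_conj_eq_inv
      (odd_card_support_of_mem_cycleFactorsFinset hodd hc)
      (conj_eq_inv_of_mem_cycleFactorsFinset hnodup ht hc)
    exact ⟨x, mem_filter.mpr ⟨mem_cycleFactorsFinset_support_le hc hx, htx⟩,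
      (cycle_is_cycleOf hx hc).symm⟩

theorem card_support_add_card_cycleType (hnodup : g.cycleType.Nodup)
    (hodd : ∀ l ∈ g.cycleType, Odd l) (hfix : Fintype.card α ≤ #g.support + 1)
    (ht : t * g * t⁻¹ = g⁻¹) : #t.support + Multiset.card g.cycleType = #g.support := by
  have hmoved : {x ∈ g.support | ¬t x = x} = t.support := by
    ext x
    simpa [← mem_support] using fun hx => support_subset_of_conj_eq_inv hfix ht hx
  have hcard : Multiset.card g.cycleType = #g.cycleFactorsFinset := by
    rw [cycleType_def, Multiset.card_map]; rfl
  rw [hcard, ← card_filter_apply_eq_self_support hnodup hodd ht, ← hmoved, add_comm,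
    card_filter_add_card_filter_not]

theorem cycleType_eq_replicate_of_sq_eq_one (ht : t ^ 2 = 1) :
    t.cycleType = Multiset.replicate (#t.support / 2) 2 := by
  have h := cycleType_of_pow_prime_eq_one ht
  have hsum := sum_cycleType t
  rw [h, Multiset.sum_replicate, smul_eq_mul] at hsum
  rw [h, ← hsum, Nat.mul_div_cancel _ two_pos]

end Equiv.Perm

/-- The diagonal hook lengths `2m - 1, 2m - 5, …` of the staircase partition `[m, m - 1, …, 1]`,
without the hook length `1` that occurs for odd `m` (a cycle type has no parts `1`). -/
def staircaseHookLengths (m : ℕ) : Multiset ℕ :=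
  ((Multiset.range ((m + 1) / 2)).map (fun i => 2 * m - 1 - 4 * i)).filter (fun l => 2 ≤ l)

theorem staircaseHookLengths_nodup (m : ℕ) : (staircaseHookLengths m).Nodup :=
  ((Multiset.nodup_range _).map_on fun i hi j hj hij => by
    simp only [Multiset.mem_range] at hi hj; omega).filter _

theorem odd_of_mem_staircaseHookLengths {m l : ℕ} (hl : l ∈ staircaseHookLengths m) : Odd l := by
  simp only [staircaseHookLengths, Multiset.mem_filter, Multiset.mem_map,
    Multiset.mem_range] at hl
  obtain ⟨⟨i, hi, rfl⟩, -⟩ := hl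
  exact Nat.odd_iff.mpr (by omega)

theorem staircaseHookLengths_two_mul (a : ℕ) :
    staircaseHookLengths (2 * a) = (Multiset.range a).map (fun i => 4 * a - 1 - 4 * i) := by
  rw [staircaseHookLengths, show (2 * a + 1) / 2 = a by omega, show 2 * (2 * a) = 4 * a by ring,
    Multiset.filter_eq_self]
  simp only [Multiset.mem_map, Multiset.mem_range]
  rintro _ ⟨i, hi, rfl⟩
  omega

theorem staircaseHookLengths_two_mul_add_one (a : ℕ) :
    staircaseHookLengths (2 * a + 1) =
      (Multiset.range a).map (fun i => 4 * a + 1 - 4 * i) := by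
  rw [staircaseHookLengths, show (2 * a + 1 + 1) / 2 = a + 1 by omega, Multiset.range_succ,
    Multiset.map_cons, Multiset.filter_cons_of_neg _ (by omega),
    show 2 * (2 * a + 1) - 1 = 4 * a + 1 by omega, Multiset.filter_eq_self]
  simp only [Multiset.mem_map, Multiset.mem_range]
  rintro _ ⟨i, hi, rfl⟩
  omega

theorem sum_map_range_sub_four_mul (c : ℕ) :
    ∀ a, 4 * a ≤ c + 4 →
      ((Multiset.range a).map fun i => c - 4 * i).sum + 2 * (a * a) = a * c + 2 * a
  | 0, _ => by simp
  | a + 1, h => by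
    have ih := sum_map_range_sub_four_mul c a (by omega)
    have hc : c - 4 * a + 4 * a = c := by omega
    rw [Multiset.range_succ, Multiset.map_cons, Multiset.sum_cons]
    linarith

theorem card_staircaseHookLengths (m : ℕ) : Multiset.card (staircaseHookLengths m) = m / 2 := by
  obtain ⟨a, rfl | rfl⟩ := Nat.even_or_odd' m
  · simp [staircaseHookLengths_two_mul]
  · simp [staircaseHookLengths_two_mul_add_one]; omega

theorem sum_staircaseHookLengths (m : ℕ) :
    (staircaseHookLengths m).sum + m % 2 = m * (m + 1) / 2 := by
  obtain ⟨a, rfl | rfl⟩ := Nat.even_or_odd' m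
  · have hsum := sum_map_range_sub_four_mul (4 * a - 1) a (by omega)
    have h1 : a * (4 * a - 1) = 4 * (a * a) - a := by rw [Nat.mul_sub_one]; ring_nf
    have h2 : 2 * a * (2 * a + 1) / 2 = 2 * (a * a) + a := by
      rw [show 2 * a * (2 * a + 1) = 2 * (2 * (a * a) + a) by ring,
        Nat.mul_div_cancel_left _ two_pos]
    rw [staircaseHookLengths_two_mul, h2]
    have := Nat.le_mul_self a
    omega
  · have hsum := sum_map_range_sub_four_mul (4 * a + 1) a (by omega)
    have h1 : a * (4 * a + 1) = 4 * (a * a) + a := by ring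
    have h2 : (2 * a + 1) * (2 * a + 1 + 1) = 2 * (2 * (a * a) + 3 * a + 1) := by ring
    rw [staircaseHookLengths_two_mul_add_one, h2]
    omega

theorem sum_staircaseHookLengths_eq (m : ℕ) :
    (staircaseHookLengths m).sum =
      Multiset.card (staircaseHookLengths m) + 2 * ((m ^ 2 + 1) / 4) := by
  have hs := sum_staircaseHookLengths m
  rw [card_staircaseHookLengths]
  obtain ⟨a, rfl | rfl⟩ := Nat.even_or_odd' m
  · have h1 : 2 * a * (2 * a + 1) = 2 * (2 * (a * a) + a) := by ring
    have h2 : (2 * a) ^ 2 = 4 * (a * a) := by ring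
    rw [h1] at hs; rw [h2]; omega
  · have h1 : (2 * a + 1) * (2 * a + 1 + 1) = 2 * (2 * (a * a) + 3 * a + 1) := by ring
    have h2 : (2 * a + 1) ^ 2 = 4 * (a * a) + 4 * a + 1 := by ring
    rw [h1] at hs; rw [h2]; omega

open Equiv.Perm in
theorem stmt_15_general (m n : ℕ) (hn : 2 * n = m * (m + 1))
    (g : Equiv.Perm (Fin n))
    (hg : g.cycleType =
      (((Multiset.range ((m + 1) / 2)).map (fun i => 2 * m - 1 - 4 * i)).filter
        (fun l => 2 ≤ l))) :
    Odd (Nat.card (Subgroup.centralizer ({g} : Set (Equiv.Perm (Fin n))))) ∧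
    ∃ t : Equiv.Perm (Fin n), t ^ 2 = 1 ∧ t⁻¹ * g * t = g⁻¹ ∧
      t.cycleType = Multiset.replicate ((m ^ 2 + 1) / 4) 2 := by
  have hg' : g.cycleType = staircaseHookLengths m := hg
  have hsupp : #g.support = (staircaseHookLengths m).sum := by rw [← sum_cycleType, hg']
  have hnodup : g.cycleType.Nodup := hg' ▸ staircaseHookLengths_nodup m
  have hodd : ∀ l ∈ g.cycleType, Odd l := hg' ▸ fun _ => odd_of_mem_staircaseHookLengths
  have hfix : Fintype.card (Fin n) ≤ #g.support + 1 := by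
    have := sum_staircaseHookLengths m
    rw [Fintype.card_fin, hsupp]
    omega
  have hC := odd_card_centralizer hnodup hodd hfix
  obtain ⟨t, ht2, ht⟩ := exists_involution_conj_eq_inv hC
    (isConj_iff_cycleType_eq.mpr (cycleType_inv g).symm)
  have htinv : t⁻¹ = t := inv_eq_of_mul_eq_one_right (by rw [← sq, ht2])
  refine ⟨hC, t, ht2, by simpa [htinv] using ht, ?_⟩
  have hcount := card_support_add_card_cycleType hnodup hodd hfix ht
  rw [hg', hsupp, sum_staircaseHookLengths_eq] at hcount
  rw [cycleType_eq_replicate_of_sq_eq_one ht2]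
  congr 1
  omega

theorem stmt_15 (m n : ℕ) (hm : 0 < m) (hn : 2 * n = m * (m + 1))
    (g : Equiv.Perm (Fin n))
    (hg : g.cycleType =
      (((Multiset.range ((m + 1) / 2)).map (fun i => 2 * m - 1 - 4 * i)).filter
        (fun l => 2 ≤ l))) :
    Odd (Nat.card (Subgroup.centralizer ({g} : Set (Equiv.Perm (Fin n))))) ∧
    ∃ t : Equiv.Perm (Fin n), t ^ 2 = 1 ∧ t⁻¹ * g * t = g⁻¹ ∧
      t.cycleType = Multiset.replicate ((m ^ 2 + 1) / 4) 2 :=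
  stmt_15_general m n hn g hg
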